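/- arXiv:1403.0406 — 6 statements merged into one kernel-verified Lean document; each statement's English description precedes it below -/
import Mathlib

section
/- If (≿, ≻) is an order pair on a set A, then the multiset extensions (≿^mul, ≻^mul) form an order pair on finite multisets over A. -/
/-- `M ≿^mul N`: an enumeration matches an initial part of `N` by `≿` and
dominates every remaining element of `N` by `≻`. -/
def MulGe {α : Type*} (ge gt : α → α → Prop) (M N : Multiset α) : Prop :=
  ∃ M₁ M₂ N₁ N₂ : Multiset α, M = M₁ + M₂ ∧ N = N₁ + N₂ ∧
    Multiset.Rel ge M₁ N₁ ∧ ∀ y ∈ N₂, ∃ x ∈ M₂, gt x y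

/-- `M ≻^mul N`: as `M ≿^mul N` but with a nonempty strictly dominating part. -/
def MulGt {α : Type*} (ge gt : α → α → Prop) (M N : Multiset α) : Prop :=
  ∃ M₁ M₂ N₁ N₂ : Multiset α, M = M₁ + M₂ ∧ N = N₁ + N₂ ∧
    Multiset.Rel ge M₁ N₁ ∧ M₂ ≠ 0 ∧ ∀ y ∈ N₂, ∃ x ∈ M₂, gt x y

namespace MulExtAux

open Multiset

variable {α : Type*} {ge gt : α → α → Prop}

lemma rel_refl (h : Reflexive ge) (M : Multiset α) : Multiset.Rel ge M M := by
  induction M using Multiset.induction_on with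
  | empty => exact Multiset.Rel.zero
  | cons a s ih => exact Multiset.Rel.cons (h a) ih

lemma rel_trans (h : Transitive ge) {A B C : Multiset α}
    (h1 : Multiset.Rel ge A B) (h2 : Multiset.Rel ge B C) : Multiset.Rel ge A C := by
  induction h1 generalizing C with
  | zero => rw [Multiset.rel_zero_left] at h2; subst h2; exact Multiset.Rel.zero
  | @cons a b as bs hab _ ih =>
    obtain ⟨c, cs, hbc, hrest, rfl⟩ := Multiset.rel_cons_left.mp h2
    exact Multiset.Rel.cons (h hab hbc) (ih hrest)

lemma rel_mem_left [DecidableEq α] {A B : Multiset α} (h : Multiset.Rel ge A B) {a : α} (ha : a ∈ A) :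
    ∃ b ∈ B, ge a b ∧ Multiset.Rel ge (A.erase a) (B.erase b) := by
  rw [← Multiset.cons_erase ha] at h
  obtain ⟨b, bs, hab, hrest, rfl⟩ := Multiset.rel_cons_left.mp h
  exact ⟨b, Multiset.mem_cons_self _ _, hab, by rwa [Multiset.erase_cons_head]⟩

lemma rel_mem_right {A B : Multiset α} (h : Multiset.Rel ge A B) {b : α} (hb : b ∈ B) :
    ∃ a ∈ A, ge a b := by
  classical
  rw [← Multiset.cons_erase hb] at h
  obtain ⟨a, as, hab, _, rfl⟩ := Multiset.rel_cons_right.mp h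
  exact ⟨a, Multiset.mem_cons_self _ _, hab⟩

/-- Riesz decomposition for multisets. -/
lemma riesz {N₁ N₂ N₁' N₂' : Multiset α} (h : N₁ + N₂ = N₁' + N₂') :
    ∃ A B C D : Multiset α, N₁ = A + B ∧ N₂ = C + D ∧ N₁' = A + C ∧ N₂' = B + D := by
  classical
  have hc : ∀ a : α, N₁.count a + N₂.count a = N₁'.count a + N₂'.count a := by
    intro a
    have := congrArg (Multiset.count a) h
    simpa [Multiset.count_add] using this
  refine ⟨N₁ ∩ N₁', N₁ - N₁', N₁' - N₁, N₂ - (N₁' - N₁), ?_, ?_, ?_, ?_⟩ <;>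
  · ext a
    have := hc a
    simp only [Multiset.count_add, Multiset.count_sub, Multiset.count_inter]
    omega

lemma exists_max (hirr : Irreflexive gt) (htr : Transitive gt) :
    ∀ S : Multiset α, S ≠ 0 → ∃ m ∈ S, ∀ x ∈ S, ¬ gt x m := by
  intro S
  induction S using Multiset.induction_on with
  | empty => intro h; exact absurd rfl h
  | cons a s ih =>
    intro _
    by_cases hs : s = 0
    · subst hs
      refine ⟨a, Multiset.mem_cons_self _ _, fun x hx hgt => ?_⟩
      rcases Multiset.mem_cons.mp hx with rfl | hx
      · exact hirr _ hgt
      · exact absurd hx (Multiset.notMem_zero x)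
    · obtain ⟨m, hm, hmax⟩ := ih hs
      by_cases hgt : gt a m
      · refine ⟨a, Multiset.mem_cons_self _ _, fun x hx hx' => ?_⟩
        rcases Multiset.mem_cons.mp hx with rfl | hx
        · exact hirr _ hx'
        · exact hmax x hx (htr hx' hgt)
      · refine ⟨m, Multiset.mem_cons_of_mem hm, fun x hx hx' => ?_⟩
        rcases Multiset.mem_cons.mp hx with rfl | hx
        · exact hgt hx'
        · exact hmax x hx hx'

lemma no_cycle (hge_refl : Reflexive ge) (hge_trans : Transitive ge)
    (hgt_irrefl : Irreflexive gt) (hgt_trans : Transitive gt)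
    (hcompat : ∀ a b c d, ge a b → gt b c → ge c d → gt a d) :
    ∀ n (M₁ M₂ N₁ N₂ : Multiset α), Multiset.card M₁ = n →
      Multiset.Rel ge M₁ N₁ → M₁ + M₂ = N₁ + N₂ → M₂ ≠ 0 →
      (∀ y ∈ N₂, ∃ x ∈ M₂, gt x y) → False := by
  classical
  intro n
  induction n using Nat.strong_induction_on with
  | _ n ih =>
  intro M₁ M₂ N₁ N₂ hcard hrel hsum hne hdom
  rcases n with _ | n'
  · -- M₁ = 0
    have hM₁ : M₁ = 0 := Multiset.card_eq_zero.mp hcard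
    subst hM₁
    have hN₁ : N₁ = 0 := Multiset.rel_zero_left.mp hrel
    subst hN₁
    simp only [zero_add] at hsum
    subst hsum
    obtain ⟨m, hm, hmax⟩ := exists_max hgt_irrefl hgt_trans M₂ hne
    obtain ⟨x, hx, hxm⟩ := hdom m hm
    exact hmax x hx hxm
  · -- M₁ = a ::ₘ M₁''
    have hpos : M₁ ≠ 0 := by
      intro h; rw [h] at hcard; simp at hcard
    obtain ⟨a, ha⟩ := Multiset.exists_mem_of_ne_zero hpos
    obtain ⟨M₁'', rfl⟩ := Multiset.exists_cons_of_mem ha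
    obtain ⟨b, N₁'', hab, hrel'', rfl⟩ := Multiset.rel_cons_left.mp hrel
    have hcard'' : Multiset.card M₁'' = n' := by
      simpa using hcard
    have hbmem : b ∈ a ::ₘ M₁'' + M₂ := by
      rw [hsum]; exact Multiset.mem_add.mpr (Or.inl (Multiset.mem_cons_self _ _))
    rcases Multiset.mem_add.mp hbmem with hb | hb
    · rcases Multiset.mem_cons.mp hb with rfl | hb
      · -- b = a : cancel
        have : M₁'' + M₂ = N₁'' + N₂ := by
          have : b ::ₘ (M₁'' + M₂) = b ::ₘ (N₁'' + N₂) := by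
            simpa [Multiset.cons_add] using hsum
          exact (Multiset.cons_inj_right b).mp this
        exact ih n' (Nat.lt_succ_self n') M₁'' M₂ N₁'' N₂ hcard'' hrel'' this hne hdom
      · -- b ∈ M₁'' : re-pair
        obtain ⟨K, rfl⟩ := Multiset.exists_cons_of_mem hb
        obtain ⟨c, N', hbc, hrelK, rfl⟩ := Multiset.rel_cons_left.mp hrel''
        have hsum' : (a ::ₘ K) + M₂ = (c ::ₘ N') + N₂ := by
          have h : b ::ₘ (a ::ₘ (K + M₂)) = b ::ₘ (c ::ₘ (N' + N₂)) := by
            simp only [Multiset.cons_add, Multiset.add_cons] at hsum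
            first
            | exact hsum
            | (rw [Multiset.cons_swap] at hsum; exact hsum)
          have h' := (Multiset.cons_inj_right b).mp h
          simpa [Multiset.cons_add] using h'
        have hrelnew : Multiset.Rel ge (a ::ₘ K) (c ::ₘ N') :=
          Multiset.Rel.cons (hge_trans hab hbc) hrelK
        have hcardnew : Multiset.card (a ::ₘ K) = n' := by
          have : Multiset.card (b ::ₘ K) = n' := hcard''
          simpa using this
        exact ih n' (Nat.lt_succ_self n') _ M₂ _ N₂ hcardnew hrelnew hsum' hne hdom
    · -- b ∈ M₂ : move a into the strict part
      obtain ⟨M₂', rfl⟩ := Multiset.exists_cons_of_mem hb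
      have hsum' : M₁'' + (a ::ₘ M₂') = N₁'' + N₂ := by
        have h : b ::ₘ (a ::ₘ (M₁'' + M₂')) = b ::ₘ (N₁'' + N₂) := by
          simp only [Multiset.cons_add, Multiset.add_cons] at hsum
          exact hsum
        have h' := (Multiset.cons_inj_right b).mp h
        simpa [Multiset.add_cons] using h'
      have hdom' : ∀ y ∈ N₂, ∃ x ∈ a ::ₘ M₂', gt x y := by
        intro y hy
        obtain ⟨x, hx, hxy⟩ := hdom y hy
        rcases Multiset.mem_cons.mp hx with rfl | hx
        · exact ⟨a, Multiset.mem_cons_self _ _, hcompat a x y y hab hxy (hge_refl y)⟩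
        · exact ⟨x, Multiset.mem_cons_of_mem hx, hxy⟩
      have hne' : (a ::ₘ M₂' : Multiset α) ≠ 0 := Multiset.cons_ne_zero
      exact ih n' (Nat.lt_succ_self n') M₁'' _ N₁'' N₂ hcard'' hrel'' hsum' hne' hdom'

lemma key (hge_refl : Reflexive ge) (hge_trans : Transitive ge)
    (hgt_trans : Transitive gt)
    (hcompat : ∀ a b c d, ge a b → gt b c → ge c d → gt a d)
    {M N P M₁ M₂ N₁ N₂ N₁' N₂' P₁ P₂ : Multiset α}
    (hM : M = M₁ + M₂) (hN : N = N₁ + N₂)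
    (hr1 : Multiset.Rel ge M₁ N₁) (hd1 : ∀ y ∈ N₂, ∃ x ∈ M₂, gt x y)
    (hN' : N = N₁' + N₂') (hP : P = P₁ + P₂)
    (hr2 : Multiset.Rel ge N₁' P₁) (hd2 : ∀ z ∈ P₂, ∃ y ∈ N₂', gt y z) :
    ∃ K₁ K₂ L₁ L₂ : Multiset α, M = K₁ + K₂ ∧ P = L₁ + L₂ ∧
      Multiset.Rel ge K₁ L₁ ∧ (∀ z ∈ L₂, ∃ x ∈ K₂, gt x z) ∧
      ((M₂ ≠ 0 ∨ N₂' ≠ 0) → K₂ ≠ 0) := by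
  classical
  obtain ⟨A, B, C, D, hN₁, hN₂, hN₁', hN₂'⟩ := riesz (hN ▸ hN')
  rw [hN₁] at hr1
  obtain ⟨MA, MB, hrA, hrB, hM₁⟩ := Multiset.rel_add_right.mp hr1
  rw [hN₁'] at hr2
  obtain ⟨PA, PC, hrA', hrC', hP₁⟩ := Multiset.rel_add_left.mp hr2
  refine ⟨MA, MB + M₂, PA, PC + P₂, ?_, ?_, rel_trans hge_trans hrA hrA', ?_, ?_⟩
  · rw [hM, hM₁, add_assoc]
  · rw [hP, hP₁, add_assoc]
  · intro z hz
    rcases Multiset.mem_add.mp hz with hz | hz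
    · -- z ∈ PC
      obtain ⟨c, hc, hcz⟩ := rel_mem_right hrC' hz
      have hcN₂ : c ∈ N₂ := by rw [hN₂]; exact Multiset.mem_add.mpr (Or.inl hc)
      obtain ⟨x, hx, hxc⟩ := hd1 c hcN₂
      exact ⟨x, Multiset.mem_add.mpr (Or.inr hx), hcompat x x c z (hge_refl x) hxc hcz⟩
    · -- z ∈ P₂
      obtain ⟨y, hy, hyz⟩ := hd2 z hz
      rw [hN₂'] at hy
      rcases Multiset.mem_add.mp hy with hy | hy
      · -- y ∈ B
        obtain ⟨x, hx, hxy⟩ := rel_mem_right hrB hy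
        exact ⟨x, Multiset.mem_add.mpr (Or.inl hx), hcompat x y z z hxy hyz (hge_refl z)⟩
      · -- y ∈ D ⊆ N₂
        have hyN₂ : y ∈ N₂ := by rw [hN₂]; exact Multiset.mem_add.mpr (Or.inr hy)
        obtain ⟨x, hx, hxy⟩ := hd1 y hyN₂
        exact ⟨x, Multiset.mem_add.mpr (Or.inr hx), hgt_trans hxy hyz⟩
  · rintro (h | h) h0
    · apply h
      have := congrArg Multiset.card h0
      simp only [Multiset.card_add, Multiset.card_zero] at this
      exact Multiset.card_eq_zero.mp (by omega)
    · apply h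
      rw [hN₂']
      have hB : MB = 0 ∧ M₂ = 0 := by
        constructor
        · have := congrArg Multiset.card h0
          simp only [Multiset.card_add, Multiset.card_zero] at this
          exact Multiset.card_eq_zero.mp (by omega)
        · have := congrArg Multiset.card h0
          simp only [Multiset.card_add, Multiset.card_zero] at this
          exact Multiset.card_eq_zero.mp (by omega)
      have hBzero : B = 0 := by
        by_contra hB0
        obtain ⟨b, hb⟩ := Multiset.exists_mem_of_ne_zero hB0
        obtain ⟨x, hx, _⟩ := rel_mem_right hrB hb
        rw [hB.1] at hx
        exact Multiset.notMem_zero x hx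
      have hDzero : D = 0 := by
        by_contra hD0
        obtain ⟨y, hy⟩ := Multiset.exists_mem_of_ne_zero hD0
        have hyN₂ : y ∈ N₂ := by rw [hN₂]; exact Multiset.mem_add.mpr (Or.inr hy)
        obtain ⟨x, hx, _⟩ := hd1 y hyN₂
        rw [hB.2] at hx
        exact Multiset.notMem_zero x hx
      rw [hBzero, hDzero, add_zero]

end MulExtAux

theorem multiset_extension_order_pair {α : Type*} (ge gt : α → α → Prop)
    (hge_refl : Reflexive ge) (hge_trans : Transitive ge)
    (hgt_irrefl : Irreflexive gt) (hgt_trans : Transitive gt)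
    (hcompat : ∀ a b c d, ge a b → gt b c → ge c d → gt a d) :
    Reflexive (MulGe ge gt) ∧ Transitive (MulGe ge gt) ∧
    Irreflexive (MulGt ge gt) ∧ Transitive (MulGt ge gt) ∧
    (∀ M N P Q : Multiset α,
      MulGe ge gt M N → MulGt ge gt N P → MulGe ge gt P Q → MulGt ge gt M Q) := by
  have hGeGt : ∀ M N P, MulGe ge gt M N → MulGt ge gt N P → MulGt ge gt M P := by
    rintro M N P ⟨M₁, M₂, N₁, N₂, hM, hN, hr1, hd1⟩ ⟨N₁', N₂', P₁, P₂, hN', hP, hr2, hne, hd2⟩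
    obtain ⟨K₁, K₂, L₁, L₂, h1, h2, h3, h4, h5⟩ :=
      MulExtAux.key hge_refl hge_trans hgt_trans hcompat hM hN hr1 hd1 hN' hP hr2 hd2
    exact ⟨K₁, K₂, L₁, L₂, h1, h2, h3, h5 (Or.inr hne), h4⟩
  have hGtGe : ∀ M N P, MulGt ge gt M N → MulGe ge gt N P → MulGt ge gt M P := by
    rintro M N P ⟨M₁, M₂, N₁, N₂, hM, hN, hr1, hne, hd1⟩ ⟨N₁', N₂', P₁, P₂, hN', hP, hr2, hd2⟩
    obtain ⟨K₁, K₂, L₁, L₂, h1, h2, h3, h4, h5⟩ :=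
      MulExtAux.key hge_refl hge_trans hgt_trans hcompat hM hN hr1 hd1 hN' hP hr2 hd2
    exact ⟨K₁, K₂, L₁, L₂, h1, h2, h3, h5 (Or.inl hne), h4⟩
  have hGtGe' : ∀ M N, MulGt ge gt M N → MulGe ge gt M N := by
    rintro M N ⟨M₁, M₂, N₁, N₂, hM, hN, hr, _, hd⟩
    exact ⟨M₁, M₂, N₁, N₂, hM, hN, hr, hd⟩
  refine ⟨?_, ?_, ?_, ?_, ?_⟩
  · intro M
    exact ⟨M, 0, M, 0, by simp, by simp, MulExtAux.rel_refl hge_refl M, by simp⟩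
  · rintro M N P ⟨M₁, M₂, N₁, N₂, hM, hN, hr1, hd1⟩ ⟨N₁', N₂', P₁, P₂, hN', hP, hr2, hd2⟩
    obtain ⟨K₁, K₂, L₁, L₂, h1, h2, h3, h4, _⟩ :=
      MulExtAux.key hge_refl hge_trans hgt_trans hcompat hM hN hr1 hd1 hN' hP hr2 hd2
    exact ⟨K₁, K₂, L₁, L₂, h1, h2, h3, h4⟩
  · rintro M ⟨M₁, M₂, N₁, N₂, hM, hN, hr, hne, hd⟩
    exact MulExtAux.no_cycle hge_refl hge_trans hgt_irrefl hgt_trans hcompat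
      (Multiset.card M₁) M₁ M₂ N₁ N₂ rfl hr (hM ▸ hN ▸ rfl) hne hd
  · intro M N P h1 h2
    exact hGeGt M N P (hGtGe' M N h1) h2
  · intro M N P Q h1 h2 h3
    exact hGtGe M P Q (hGeGt M N P h1 h2) h3
end

section
/- Let (≿, ≻) be an order pair on terms such that the relation ∼ := ≿ \ ≻ is symmetric. If s ∼ t, then M ⊎ {s} ≻^mul N ⊎ {t} holds if and only if M ≻^mul N holds. -/
private lemma shift_mem {α : Type*} [DecidableEq α] {a : α} {A B : Multiset α}
    (ha : a ∈ A) : A + B = A.erase a + (a ::ₘ B) := by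
  conv_lhs => rw [← Multiset.cons_erase ha]
  rw [Multiset.cons_add, Multiset.add_cons]

private lemma cancel_cons_left {α : Type*} [DecidableEq α] {a : α} {M M₁ M₂ : Multiset α}
    (h : a ::ₘ M = M₁ + M₂) (ha : a ∈ M₁) : M = M₁.erase a + M₂ := by
  have h2 : a ::ₘ M = a ::ₘ (M₁.erase a + M₂) := by
    rw [← Multiset.cons_add, Multiset.cons_erase ha, h]
  exact (Multiset.cons_inj_right a).mp h2

private lemma cancel_cons_right {α : Type*} [DecidableEq α] {a : α} {M M₁ M₂ : Multiset α}
    (h : a ::ₘ M = M₁ + M₂) (ha : a ∈ M₂) : M = M₁ + M₂.erase a := by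
  rw [add_comm] at h ⊢
  exact cancel_cons_left h ha

private lemma rel_erase_left {α : Type*} [DecidableEq α] {r : α → α → Prop} {M N : Multiset α} {a : α}
    (h : Multiset.Rel r M N) (ha : a ∈ M) :
    ∃ b ∈ N, r a b ∧ Multiset.Rel r (M.erase a) (N.erase b) := by
  rw [← Multiset.cons_erase ha, Multiset.rel_cons_left] at h
  obtain ⟨b, N', hab, hrel, hN⟩ := h
  refine ⟨b, by simp [hN], hab, ?_⟩
  rw [hN, Multiset.erase_cons_head]
  exact hrel

private lemma rel_erase_right {α : Type*} [DecidableEq α] {r : α → α → Prop} {M N : Multiset α} {b : α}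
    (h : Multiset.Rel r M N) (hb : b ∈ N) :
    ∃ a ∈ M, r a b ∧ Multiset.Rel r (M.erase a) (N.erase b) := by
  have h' : Multiset.Rel (flip r) N M := (Multiset.rel_flip).mpr h
  obtain ⟨a, haM, hab, hrel⟩ := rel_erase_left h' hb
  exact ⟨a, haM, hab, (Multiset.rel_flip).mp hrel⟩

theorem mulext_cancel_equiv {α : Type*} (ge gt : α → α → Prop)
    (hge_refl : Reflexive ge) (hge_trans : Transitive ge)
    (hgt_irrefl : Irreflexive gt) (hgt_trans : Transitive gt)
    (hcompat : ∀ a b c d, ge a b → gt b c → ge c d → gt a d)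
    (hsym : ∀ a b, ge a b ∧ ¬ gt a b → ge b a ∧ ¬ gt b a)
    (s t : α) (hst : ge s t ∧ ¬ gt s t) (M N : Multiset α) :
    MulGt ge gt (s ::ₘ M) (t ::ₘ N) ↔ MulGt ge gt M N := by
  classical
  obtain ⟨hts, hnts⟩ := hsym s t hst
  constructor
  · rintro ⟨M₁, M₂, N₁, N₂, hM, hN, hrel, hne, hdom⟩
    have hs : s ∈ M₁ + M₂ := hM ▸ Multiset.mem_cons_self s M
    have ht : t ∈ N₁ + N₂ := hN ▸ Multiset.mem_cons_self t N
    rcases Multiset.mem_add.mp ht with ht1 | ht2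
    · -- t ∈ N₁, paired with some p ∈ M₁
      obtain ⟨p, hpM, hpt, hrel'⟩ := rel_erase_right hrel ht1
      rcases Multiset.mem_add.mp hs with hs1 | hs2
      · -- s ∈ M₁ : swap argument
        by_cases hps : p = s
        · subst hps
          exact ⟨M₁.erase p, M₂, N₁.erase t, N₂, cancel_cons_left hM hs1,
            cancel_cons_left hN ht1, hrel', hne, hdom⟩
        · have hs' : s ∈ M₁.erase p := (Multiset.mem_erase_of_ne (fun h => hps h.symm)).mpr hs1
          obtain ⟨u, huN, hsu, hrel''⟩ := rel_erase_left hrel' hs'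
          have hpu : ge p u := hge_trans hpt (hge_trans hts hsu)
          have hrel3 : Multiset.Rel ge (M₁.erase s) (N₁.erase t) := by
            have hpm : p ∈ M₁.erase s := (Multiset.mem_erase_of_ne hps).mpr hpM
            have hum : u ∈ N₁.erase t := huN
            rw [← Multiset.cons_erase hpm, ← Multiset.cons_erase hum]
            refine Multiset.Rel.cons hpu ?_
            rw [show (M₁.erase s).erase p = (M₁.erase p).erase s from Multiset.erase_comm ..]
            exact hrel''
          exact ⟨M₁.erase s, M₂, N₁.erase t, N₂, cancel_cons_left hM hs1,
            cancel_cons_left hN ht1, hrel3, hne, hdom⟩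
      · -- s ∈ M₂ : move p to the strict part
        refine ⟨M₁.erase p, p ::ₘ M₂.erase s, N₁.erase t, N₂, ?_, cancel_cons_left hN ht1,
          hrel', Multiset.cons_ne_zero, ?_⟩
        · rw [cancel_cons_right hM hs2, shift_mem hpM]
        · intro y hy
          obtain ⟨x, hxM, hxy⟩ := hdom y hy
          by_cases hxs : x = s
          · exact ⟨p, Multiset.mem_cons_self p _,
              hcompat p s y y (hge_trans hpt hts) (hxs ▸ hxy) (hge_refl y)⟩
          · exact ⟨x, Multiset.mem_cons_of_mem ((Multiset.mem_erase_of_ne hxs).mpr hxM), hxy⟩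
    · -- t ∈ N₂, dominated by some x ∈ M₂
      obtain ⟨x, hxM, hxt⟩ := hdom t ht2
      have hxs : x ≠ s := fun h => hst.2 (h ▸ hxt)
      have hxgs : gt x s := hcompat x x t s (hge_refl x) hxt hts
      rcases Multiset.mem_add.mp hs with hs1 | hs2
      · -- s ∈ M₁, paired with some u ∈ N₁ : move u to the strict side
        obtain ⟨u, huN, hsu, hrel'⟩ := rel_erase_left hrel hs1
        refine ⟨M₁.erase s, M₂, N₁.erase u, u ::ₘ N₂.erase t, cancel_cons_left hM hs1, ?_,
          hrel', hne, ?_⟩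
        · rw [cancel_cons_right hN ht2, shift_mem huN]
        · intro y hy
          rcases Multiset.mem_cons.mp hy with rfl | hy'
          · exact ⟨x, hxM, hcompat x x s y (hge_refl x) hxgs hsu⟩
          · exact hdom y (Multiset.mem_of_mem_erase hy')
      · -- s ∈ M₂
        refine ⟨M₁, M₂.erase s, N₁, N₂.erase t, cancel_cons_right hM hs2,
          cancel_cons_right hN ht2, hrel, ?_, ?_⟩
        · intro h0
          have : x ∈ M₂.erase s := (Multiset.mem_erase_of_ne hxs).mpr hxM
          simp [h0] at this
        · intro y hy
          obtain ⟨x', hx'M, hx'y⟩ := hdom y (Multiset.mem_of_mem_erase hy)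
          by_cases hx's : x' = s
          · subst hx's
            exact ⟨x, (Multiset.mem_erase_of_ne hxs).mpr hxM, hgt_trans hxgs hx'y⟩
          · exact ⟨x', (Multiset.mem_erase_of_ne hx's).mpr hx'M, hx'y⟩
  · rintro ⟨M₁, M₂, N₁, N₂, hM, hN, hrel, hne, hdom⟩
    exact ⟨s ::ₘ M₁, M₂, t ::ₘ N₁, N₂, by rw [hM, Multiset.cons_add],
      by rw [hN, Multiset.cons_add], Multiset.Rel.cons hst.1 hrel, hne, hdom⟩
end

section
/- Let ≻ be as above with f(u,v) ≻ u, v and let ≿ be a compatible preorder. If s ≿ t then {s} ≿^mul tf_f(t) or {s} ≻^mul tf_f(t). -/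
inductive Term (F V : Type) : Type where
  | var : V → Term F V
  | fn  : F → List (Term F V) → Term F V

def tf {F V : Type} [DecidableEq F] (f : F) : Term F V → Multiset (Term F V)
  | .fn g [t1, t2] =>
      if g = f then tf f t1 + tf f t2 else {Term.fn g [t1, t2]}
  | t => {t}

theorem mem_tf_aux {F V : Type} [DecidableEq F]
    (gt : Term F V → Term F V → Prop) (hgt_trans : Transitive gt) (f : F)
    (hf : ∀ u v : Term F V, gt (.fn f [u, v]) u ∧ gt (.fn f [u, v]) v) :
    ∀ t y : Term F V, y ∈ tf f t → y = t ∨ gt t y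
  | .fn g [t1, t2], y, h => by
      by_cases hg : g = f
      · rw [tf, if_pos hg, Multiset.mem_add] at h
        rw [hg]
        rcases h with h | h
        · rcases mem_tf_aux gt hgt_trans f hf t1 y h with heq | h'
          · exact Or.inr (by rw [heq]; exact (hf t1 t2).1)
          · exact Or.inr (hgt_trans (hf t1 t2).1 h')
        · rcases mem_tf_aux gt hgt_trans f hf t2 y h with heq | h'
          · exact Or.inr (by rw [heq]; exact (hf t1 t2).2)
          · exact Or.inr (hgt_trans (hf t1 t2).2 h')
      · rw [tf, if_neg hg] at h
        exact Or.inl (Multiset.mem_singleton.mp h)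
  | .var v, y, h => by
      rw [tf] at h
      · exact Or.inl (Multiset.mem_singleton.mp h)
      · intro g t1 t2 hh; simp at hh
  | .fn g [], y, h => by
      rw [tf] at h
      · exact Or.inl (Multiset.mem_singleton.mp h)
      · intro g' t1 t2 hh; simp at hh
  | .fn g [a], y, h => by
      rw [tf] at h
      · exact Or.inl (Multiset.mem_singleton.mp h)
      · intro g' t1 t2 hh; simp at hh
  | .fn g (a :: b :: c :: l), y, h => by
      rw [tf] at h
      · exact Or.inl (Multiset.mem_singleton.mp h)
      · intro g' t1 t2 hh; simp at hh

theorem singleton_mulge_topflatten {F V : Type} [DecidableEq F]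
    (ge gt : Term F V → Term F V → Prop)
    (hge_refl : Reflexive ge) (hge_trans : Transitive ge)
    (hgt_irrefl : Irreflexive gt) (hgt_trans : Transitive gt)
    (hcompat : ∀ a b c d, ge a b → gt b c → ge c d → gt a d)
    (f : F) (hf : ∀ u v : Term F V, gt (.fn f [u, v]) u ∧ gt (.fn f [u, v]) v)
    (s t : Term F V) (hst : ge s t) :
    MulGe ge gt {s} (tf f t) ∨ MulGt ge gt {s} (tf f t) := by
  have easy : tf f t = {t} → MulGe ge gt {s} (tf f t) ∨ MulGt ge gt {s} (tf f t) := by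
    intro h
    left
    refine ⟨{s}, 0, tf f t, 0, (add_zero _).symm, (add_zero _).symm, ?_, by simp⟩
    rw [h]
    exact Multiset.Rel.cons hst Multiset.Rel.zero
  match t, hst, easy with
  | .fn g [t1, t2], hst, easy =>
    by_cases hg : g = f
    · right
      refine ⟨0, {s}, 0, tf f (.fn g [t1, t2]), (zero_add _).symm, (zero_add _).symm,
        Multiset.Rel.zero, by simp, ?_⟩
      intro y hy
      refine ⟨s, Multiset.mem_singleton_self s, ?_⟩
      rw [tf, if_pos hg] at hy
      have hty : gt (Term.fn g [t1, t2]) y := by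
        rw [hg]
        rcases Multiset.mem_add.mp hy with hy | hy
        · rcases mem_tf_aux gt hgt_trans f hf t1 y hy with heq | h'
          · rw [heq]; exact (hf t1 t2).1
          · exact hgt_trans (hf t1 t2).1 h'
        · rcases mem_tf_aux gt hgt_trans f hf t2 y hy with heq | h'
          · rw [heq]; exact (hf t1 t2).2
          · exact hgt_trans (hf t1 t2).2 h'
      exact hcompat s _ y y hst hty (hge_refl y)
    · exact easy (by rw [tf, if_neg hg])
  | .var v, hst, easy => exact easy (by rw [tf]; intro g t1 t2 hh; simp at hh)
  | .fn g [], hst, easy => exact easy (by rw [tf]; intro g' t1 t2 hh; simp at hh)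
  | .fn g [a], hst, easy => exact easy (by rw [tf]; intro g' t1 t2 hh; simp at hh)
  | .fn g (a :: b :: c :: l), hst, easy => exact easy (by rw [tf]; intro g' t1 t2 hh; simp at hh)
end

section
/- Let > be a precedence, f a function symbol, and (≿, ≻) an order pair on terms. Define, for multisets S, T of terms: S ≻^f T iff S↾_{≮f} ≻^mul (T↾_{≮f} ⊎ T↾_V − S↾_V), where S↾_{≮f} is the submultiset of non-variable terms of S whose root is not smaller than f in the precedence and S↾_V is the submultiset of variables of S; similarly S ≿^f T. Then (≿^f, ≻^f) is an order pair. -/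
open scoped Classical in
/-- the variables of `M` -/
noncomputable def resV {F V : Type} (M : Multiset (Term F V)) : Multiset (Term F V) :=
  M.filter (fun t => ∃ x, t = Term.var x)

open scoped Classical in
/-- the non-variable terms of `M` whose root is not smaller than `f` -/
noncomputable def resNL {F V : Type} (prec : F → F → Prop) (f : F)
    (M : Multiset (Term F V)) : Multiset (Term F V) :=
  M.filter (fun t => ∃ g ts, t = Term.fn g ts ∧ ¬ prec g f)

open scoped Classical in
noncomputable def GtF {F V : Type} (ge gt : Term F V → Term F V → Prop)
    (prec : F → F → Prop) (f : F) (S T : Multiset (Term F V)) : Prop :=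
  MulGt ge gt (resNL prec f S) (resNL prec f T + resV T - resV S)

open scoped Classical in
noncomputable def GeF {F V : Type} (ge gt : Term F V → Term F V → Prop)
    (prec : F → F → Prop) (f : F) (S T : Multiset (Term F V)) : Prop :=
  MulGe ge gt (resNL prec f S) (resNL prec f T + resV T - resV S)

/-!
Write `S_f` for `S↾_{≮f}` and `S_V` for `S↾_V`; since these are disjoint, `S ≿^f T` says
`S_f ≿^mul T_f + (T_V - S_V)`. The multiset extensions are stable under adding a multiset to both
sides, weaken when the right side shrinks, and compose (`≿·≿ ⊆ ≿`, `≿·≻ ⊆ ≻`, `≻·≿ ⊆ ≻`): the two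
decompositions of the middle multiset have a common refinement, along which the matchings and
dominations are chained. As `Z - X ≤ (Z - Y) + (Y - X)`, transitivity and compatibility of the
`f`-extension follow. For irreflexivity, a `≻`-maximal element of the strict part of `M ≻^mul M`
cannot be dominated, so it is matched and can be cancelled from both sides.
-/

namespace Multiset

variable {α : Type*}

theorem exists_decomposition_of_add_eq_add [DecidableEq α] {a b c d : Multiset α}
    (h : a + b = c + d) :
    ∃ w x y z : Multiset α, a = w + x ∧ b = y + z ∧ c = w + y ∧ d = x + z := by
  refine ⟨a ∩ c, a - c, c - a, b - (c - a), ?_, ?_, ?_, ?_⟩ <;>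
  · ext t
    have hc := congrArg (count t) h
    simp only [count_add, count_sub, count_inter] at *
    omega

theorem add_tsub_assoc_of_disjoint [DecidableEq α] {a b c : Multiset α} (h : Disjoint a c) :
    a + b - c = a + (b - c) := by
  ext t
  simp only [count_add, count_sub]
  by_cases ht : t ∈ c
  · have := count_eq_zero.mpr (disjoint_right.mp h ht)
    omega
  · have := count_eq_zero.mpr ht
    omega

theorem Rel.exists_mem_left_of_mem_right {r : α → α → Prop} {s t : Multiset α} (h : Rel r s t)
    {b : α} (hb : b ∈ t) : ∃ a ∈ s, r a b :=
  exists_mem_of_rel_of_mem (rel_flip.mpr h) hb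

end Multiset

section MultisetExtension

open Multiset

variable {α : Type*} {ge gt : α → α → Prop}

def Dominates (gt : α → α → Prop) (M N : Multiset α) : Prop :=
  ∀ y ∈ N, ∃ x ∈ M, gt x y

theorem dominates_zero_right (M : Multiset α) : Dominates gt M 0 := by
  simp [Dominates]

theorem Dominates.ne_zero {M N : Multiset α} (h : Dominates gt M N) (hN : N ≠ 0) : M ≠ 0 := by
  obtain ⟨y, hy⟩ := exists_mem_of_ne_zero hN
  obtain ⟨x, hx, -⟩ := h y hy
  rintro rfl
  exact notMem_zero x hx

theorem Dominates.mono {M M' N N' : Multiset α} (h : Dominates gt M N) (hM : M ≤ M')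
    (hN : N' ≤ N) : Dominates gt M' N' := fun y hy =>
  let ⟨x, hx, hxy⟩ := h y (mem_of_le hN hy)
  ⟨x, mem_of_le hM hx, hxy⟩

theorem Dominates.rel_right (hcompat : ∀ a b c, gt a b → ge b c → gt a c)
    {M N P : Multiset α} (h : Dominates gt M N) (hrel : Rel ge N P) : Dominates gt M P :=
  fun z hz =>
  let ⟨y, hy, hyz⟩ := hrel.exists_mem_left_of_mem_right hz
  let ⟨x, hx, hxy⟩ := h y hy
  ⟨x, hx, hcompat x y z hxy hyz⟩

theorem exists_maximal_of_ne_zero (hgt_irrefl : Irreflexive gt) (hgt_trans : Transitive gt)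
    {s : Multiset α} (hs : s ≠ 0) : ∃ x ∈ s, ∀ y ∈ s, ¬ gt y x := by
  have : IsStrictOrder α gt := { irrefl := hgt_irrefl, trans := fun _ _ _ h₁ h₂ => hgt_trans h₁ h₂ }
  obtain ⟨x, hx⟩ := exists_mem_of_ne_zero hs
  obtain ⟨⟨m, hm⟩, -, hmin⟩ :=
    s.finite_toSet.wellFoundedOn (r := gt) |>.has_min Set.univ ⟨⟨x, hx⟩, trivial⟩
  exact ⟨m, hm, fun y hy hym => hmin ⟨y, hy⟩ trivial hym⟩

theorem MulGt.mulGe {M N : Multiset α} (h : MulGt ge gt M N) : MulGe ge gt M N :=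
  let ⟨M₁, M₂, N₁, N₂, hM, hN, hrel, _, hdom⟩ := h
  ⟨M₁, M₂, N₁, N₂, hM, hN, hrel, hdom⟩

theorem mulGe_of_le (hge_refl : Reflexive ge) {M N : Multiset α} (h : N ≤ M) :
    MulGe ge gt M N := by
  obtain ⟨K, rfl⟩ := Multiset.le_iff_exists_add.mp h
  exact ⟨N, K, N, 0, rfl, (add_zero N).symm, rel_refl_of_refl_on fun x _ => hge_refl x,
    dominates_zero_right _⟩

theorem MulGe.add_right (hge_refl : Reflexive ge) {M N : Multiset α} (h : MulGe ge gt M N)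
    (K : Multiset α) : MulGe ge gt (M + K) (N + K) :=
  let ⟨M₁, M₂, N₁, N₂, hM, hN, hrel, hdom⟩ := h
  ⟨M₁ + K, M₂, N₁ + K, N₂, by rw [hM, add_right_comm], by rw [hN, add_right_comm],
    hrel.add (rel_refl_of_refl_on fun x _ => hge_refl x), hdom⟩

theorem MulGt.add_right (hge_refl : Reflexive ge) {M N : Multiset α} (h : MulGt ge gt M N)
    (K : Multiset α) : MulGt ge gt (M + K) (N + K) :=
  let ⟨M₁, M₂, N₁, N₂, hM, hN, hrel, hne, hdom⟩ := h
  ⟨M₁ + K, M₂, N₁ + K, N₂, by rw [hM, add_right_comm], by rw [hN, add_right_comm],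
    hrel.add (rel_refl_of_refl_on fun x _ => hge_refl x), hne, hdom⟩

theorem exists_mulGe_witness_of_comp [DecidableEq α] (hge_refl : Reflexive ge)
    (hge_trans : Transitive ge) (hgt_trans : Transitive gt)
    (hcompat : ∀ a b c d, ge a b → gt b c → ge c d → gt a d)
    {M₁ M₂ N₁ N₂ N₁' N₂' P₁ P₂ : Multiset α}
    (hrel₁ : Rel ge M₁ N₁) (hdom₁ : Dominates gt M₂ N₂) (hN : N₁ + N₂ = N₁' + N₂')
    (hrel₂ : Rel ge N₁' P₁) (hdom₂ : Dominates gt N₂' P₂) :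
    ∃ K₁ K₂ L₁ L₂ : Multiset α, M₁ + M₂ = K₁ + K₂ ∧ P₁ + P₂ = L₁ + L₂ ∧
      Rel ge K₁ L₁ ∧ Dominates gt K₂ L₂ ∧ M₂ ≤ K₂ ∧ (N₂' ≠ 0 → K₂ ≠ 0) := by
  have : IsTrans α ge := ⟨fun _ _ _ => @hge_trans _ _ _⟩
  obtain ⟨A, B, C, D, rfl, rfl, rfl, rfl⟩ := exists_decomposition_of_add_eq_add hN
  obtain ⟨MA, MB, hA, hB, rfl⟩ := rel_add_right.mp hrel₁
  obtain ⟨PA, PC, hPA, hPC, rfl⟩ := rel_add_left.mp hrel₂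
  have hD : Dominates gt M₂ D := hdom₁.mono le_rfl (le_add_left _ _)
  have hdomPC : Dominates gt M₂ PC := (hdom₁.mono le_rfl (le_add_right _ _)).rel_right
    (fun a b c hab hbc => hcompat a a b c (hge_refl a) hab hbc) hPC
  have hdomP₂ : Dominates gt (MB + M₂) P₂ := by
    intro y hy
    obtain ⟨w, hw, hwy⟩ := hdom₂ y hy
    rcases mem_add.mp hw with hwB | hwD
    · obtain ⟨m, hm, hmw⟩ := hB.exists_mem_left_of_mem_right hwB
      exact ⟨m, mem_add.mpr (Or.inl hm), hcompat m w y y hmw hwy (hge_refl y)⟩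
    · obtain ⟨m, hm, hmw⟩ := hD w hwD
      exact ⟨m, mem_add.mpr (Or.inr hm), hgt_trans hmw hwy⟩
  refine ⟨MA, MB + M₂, PA, PC + P₂, add_assoc _ _ _, by rw [add_assoc], hA.trans _ hPA,
    fun y hy => (mem_add.mp hy).elim (hdomPC.mono le_add_self le_rfl y) (hdomP₂ y), le_add_self, ?_⟩
  intro hne hK
  rw [add_eq_zero] at hK
  have hB0 : B = 0 := rel_zero_left.mp (hK.1 ▸ hB)
  have hD0 : D = 0 := by
    by_contra hD0
    exact hD.ne_zero hD0 hK.2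
  exact hne (by rw [hB0, hD0, add_zero])

theorem MulGe.trans (hge_refl : Reflexive ge) (hge_trans : Transitive ge)
    (hgt_trans : Transitive gt) (hcompat : ∀ a b c d, ge a b → gt b c → ge c d → gt a d)
    {M N P : Multiset α} (h₁ : MulGe ge gt M N) (h₂ : MulGe ge gt N P) : MulGe ge gt M P := by
  classical
  obtain ⟨M₁, M₂, N₁, N₂, rfl, hN, hrel₁, hdom₁⟩ := h₁
  obtain ⟨N₁', N₂', P₁, P₂, hN', rfl, hrel₂, hdom₂⟩ := h₂
  obtain ⟨K₁, K₂, L₁, L₂, hK, hL, hrel, hdom, -, -⟩ := exists_mulGe_witness_of_comp hge_refl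
    hge_trans hgt_trans hcompat hrel₁ hdom₁ (hN.symm.trans hN') hrel₂ hdom₂
  exact ⟨K₁, K₂, L₁, L₂, hK, hL, hrel, hdom⟩

theorem MulGe.trans_mulGt (hge_refl : Reflexive ge) (hge_trans : Transitive ge)
    (hgt_trans : Transitive gt) (hcompat : ∀ a b c d, ge a b → gt b c → ge c d → gt a d)
    {M N P : Multiset α} (h₁ : MulGe ge gt M N) (h₂ : MulGt ge gt N P) : MulGt ge gt M P := by
  classical
  obtain ⟨M₁, M₂, N₁, N₂, rfl, hN, hrel₁, hdom₁⟩ := h₁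
  obtain ⟨N₁', N₂', P₁, P₂, hN', rfl, hrel₂, hne, hdom₂⟩ := h₂
  obtain ⟨K₁, K₂, L₁, L₂, hK, hL, hrel, hdom, -, hK₂⟩ := exists_mulGe_witness_of_comp hge_refl
    hge_trans hgt_trans hcompat hrel₁ hdom₁ (hN.symm.trans hN') hrel₂ hdom₂
  exact ⟨K₁, K₂, L₁, L₂, hK, hL, hrel, hK₂ hne, hdom⟩

theorem MulGt.trans_mulGe (hge_refl : Reflexive ge) (hge_trans : Transitive ge)
    (hgt_trans : Transitive gt) (hcompat : ∀ a b c d, ge a b → gt b c → ge c d → gt a d)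
    {M N P : Multiset α} (h₁ : MulGt ge gt M N) (h₂ : MulGe ge gt N P) : MulGt ge gt M P := by
  classical
  obtain ⟨M₁, M₂, N₁, N₂, rfl, hN, hrel₁, hne, hdom₁⟩ := h₁
  obtain ⟨N₁', N₂', P₁, P₂, hN', rfl, hrel₂, hdom₂⟩ := h₂
  obtain ⟨K₁, K₂, L₁, L₂, hK, hL, hrel, hdom, hM₂, -⟩ := exists_mulGe_witness_of_comp hge_refl
    hge_trans hgt_trans hcompat hrel₁ hdom₁ (hN.symm.trans hN') hrel₂ hdom₂
  exact ⟨K₁, K₂, L₁, L₂, hK, hL, hrel, fun hK₂ => hne (le_zero.mp (hK₂ ▸ hM₂)), hdom⟩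

theorem mulGt_erase_of_rel_cons [DecidableEq α] (hcompat : ∀ a b c, ge a b → gt b c → gt a c)
    {x : α} {M₁ M₂ N₁ N₂ : Multiset α} (hrel : Rel ge M₁ (x ::ₘ N₁)) (hx : x ∈ M₂)
    (hdom : Dominates gt M₂ N₂) : MulGt ge gt ((M₁ + M₂).erase x) (N₁ + N₂) := by
  obtain ⟨x', M₁', hx'x, hrel', rfl⟩ := rel_cons_right.mp hrel
  refine ⟨M₁', x' ::ₘ M₂.erase x, N₁, N₂, ?_, rfl, hrel', cons_ne_zero, ?_⟩
  · rw [erase_add_right_pos _ hx, cons_add, add_cons]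
  · intro y hy
    obtain ⟨z, hz, hzy⟩ := hdom y hy
    by_cases hzx : z = x
    · exact ⟨x', mem_cons_self _ _, hcompat x' z y (hzx ▸ hx'x) hzy⟩
    · exact ⟨z, mem_cons_of_mem ((mem_erase_of_ne hzx).mpr hz), hzy⟩

theorem mulGt_irrefl (hgt_irrefl : Irreflexive gt) (hgt_trans : Transitive gt)
    (hcompat : ∀ a b c, ge a b → gt b c → gt a c) (M : Multiset α) : ¬ MulGt ge gt M M := by
  classical
  induction M using strongInductionOn with
  | ih M ih =>
  rintro ⟨M₁, M₂, N₁, N₂, hM, hN, hrel, hne, hdom⟩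
  obtain ⟨x, hx, hmax⟩ := exists_maximal_of_ne_zero hgt_irrefl hgt_trans hne
  have hxM : x ∈ M := hM ▸ mem_add.mpr (Or.inr hx)
  rcases mem_add.mp (hN ▸ hxM) with hxN₁ | hxN₂
  · rw [← cons_erase hxN₁] at hrel
    have hcancel := mulGt_erase_of_rel_cons hcompat hrel hx hdom
    rw [← hM, ← erase_add_left_pos _ hxN₁, ← hN] at hcancel
    exact ih _ (erase_lt.mpr hxM) hcancel
  · obtain ⟨z, hz, hzx⟩ := hdom x hxN₂
    exact hmax z hz hzx

theorem add_tsub_le_add_tsub_add_tsub [DecidableEq α] (C X Y Z : Multiset α) :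
    C + (Z - X) ≤ C + (Z - Y) + (Y - X) := by
  rw [add_assoc]
  exact add_le_add_right tsub_le_tsub_add_tsub C

variable [DecidableEq α] {A B C X Y Z : Multiset α}

theorem MulGe.trans_add_tsub (hge_refl : Reflexive ge) (hge_trans : Transitive ge)
    (hgt_trans : Transitive gt) (hcompat : ∀ a b c d, ge a b → gt b c → ge c d → gt a d)
    (h₁ : MulGe ge gt A (B + (Y - X)))
    (h₂ : MulGe ge gt B (C + (Z - Y))) : MulGe ge gt A (C + (Z - X)) :=
  ((h₁.trans hge_refl hge_trans hgt_trans hcompat (h₂.add_right hge_refl _)).trans hge_refl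
    hge_trans hgt_trans hcompat (mulGe_of_le hge_refl (add_tsub_le_add_tsub_add_tsub C X Y Z)))

theorem MulGe.trans_mulGt_add_tsub (hge_refl : Reflexive ge) (hge_trans : Transitive ge)
    (hgt_trans : Transitive gt) (hcompat : ∀ a b c d, ge a b → gt b c → ge c d → gt a d)
    (h₁ : MulGe ge gt A (B + (Y - X)))
    (h₂ : MulGt ge gt B (C + (Z - Y))) : MulGt ge gt A (C + (Z - X)) :=
  ((h₁.trans_mulGt hge_refl hge_trans hgt_trans hcompat (h₂.add_right hge_refl _)).trans_mulGe
    hge_refl hge_trans hgt_trans hcompat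
    (mulGe_of_le hge_refl (add_tsub_le_add_tsub_add_tsub C X Y Z)))

theorem MulGt.trans_mulGe_add_tsub (hge_refl : Reflexive ge) (hge_trans : Transitive ge)
    (hgt_trans : Transitive gt) (hcompat : ∀ a b c d, ge a b → gt b c → ge c d → gt a d)
    (h₁ : MulGt ge gt A (B + (Y - X)))
    (h₂ : MulGe ge gt B (C + (Z - Y))) : MulGt ge gt A (C + (Z - X)) :=
  ((h₁.trans_mulGe hge_refl hge_trans hgt_trans hcompat (h₂.add_right hge_refl _)).trans_mulGe
    hge_refl hge_trans hgt_trans hcompat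
    (mulGe_of_le hge_refl (add_tsub_le_add_tsub_add_tsub C X Y Z)))

end MultisetExtension

section FExtension

open scoped Classical

variable {F V : Type} {ge gt : Term F V → Term F V → Prop} {prec : F → F → Prop} {f : F}
  {S T U : Multiset (Term F V)}

theorem resNL_add_resV_tsub (prec : F → F → Prop) (f : F) (S T : Multiset (Term F V)) :
    resNL prec f T + resV T - resV S = resNL prec f T + (resV T - resV S) := by
  refine Multiset.add_tsub_assoc_of_disjoint (Multiset.disjoint_left.mpr fun ht hs => ?_)
  obtain ⟨g, ts, rfl, -⟩ := (Multiset.mem_filter.mp ht).2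
  obtain ⟨x, hx⟩ := (Multiset.mem_filter.mp hs).2
  cases hx

theorem geF_iff : GeF ge gt prec f S T ↔
    MulGe ge gt (resNL prec f S) (resNL prec f T + (resV T - resV S)) := by
  rw [GeF, resNL_add_resV_tsub]

theorem gtF_iff : GtF ge gt prec f S T ↔
    MulGt ge gt (resNL prec f S) (resNL prec f T + (resV T - resV S)) := by
  rw [GtF, resNL_add_resV_tsub]

theorem GtF.geF (h : GtF ge gt prec f S T) : GeF ge gt prec f S T :=
  MulGt.mulGe h

theorem geF_refl (hge_refl : Reflexive ge) (S : Multiset (Term F V)) : GeF ge gt prec f S S :=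
  mulGe_of_le hge_refl (add_tsub_cancel_right _ _).le

theorem gtF_irrefl (hgt_irrefl : Irreflexive gt) (hgt_trans : Transitive gt)
    (hcompat : ∀ a b c, ge a b → gt b c → gt a c) (S : Multiset (Term F V)) :
    ¬ GtF ge gt prec f S S := by
  rw [GtF, add_tsub_cancel_right]
  exact mulGt_irrefl hgt_irrefl hgt_trans hcompat _

theorem GeF.trans (hge_refl : Reflexive ge) (hge_trans : Transitive ge)
    (hgt_trans : Transitive gt) (hcompat : ∀ a b c d, ge a b → gt b c → ge c d → gt a d)
    (h₁ : GeF ge gt prec f S T) (h₂ : GeF ge gt prec f T U) :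
    GeF ge gt prec f S U := by
  rw [geF_iff] at *
  exact h₁.trans_add_tsub hge_refl hge_trans hgt_trans hcompat h₂

theorem GeF.trans_gtF (hge_refl : Reflexive ge) (hge_trans : Transitive ge)
    (hgt_trans : Transitive gt) (hcompat : ∀ a b c d, ge a b → gt b c → ge c d → gt a d)
    (h₁ : GeF ge gt prec f S T) (h₂ : GtF ge gt prec f T U) :
    GtF ge gt prec f S U := by
  rw [geF_iff, gtF_iff] at *
  exact h₁.trans_mulGt_add_tsub hge_refl hge_trans hgt_trans hcompat h₂

theorem GtF.trans_geF (hge_refl : Reflexive ge) (hge_trans : Transitive ge)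
    (hgt_trans : Transitive gt) (hcompat : ∀ a b c d, ge a b → gt b c → ge c d → gt a d)
    (h₁ : GtF ge gt prec f S T) (h₂ : GeF ge gt prec f T U) :
    GtF ge gt prec f S U := by
  rw [geF_iff, gtF_iff] at *
  exact h₁.trans_mulGe_add_tsub hge_refl hge_trans hgt_trans hcompat h₂

end FExtension

theorem f_extension_order_pair_general {F V : Type} (prec : F → F → Prop)
    (f : F)
    (ge gt : Term F V → Term F V → Prop)
    (hge_refl : Reflexive ge) (hge_trans : Transitive ge)
    (hgt_irrefl : Irreflexive gt) (hgt_trans : Transitive gt)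
    (hcompat : ∀ a b c d, ge a b → gt b c → ge c d → gt a d) :
    Reflexive (GeF ge gt prec f) ∧ Transitive (GeF ge gt prec f) ∧
    Irreflexive (GtF ge gt prec f) ∧ Transitive (GtF ge gt prec f) ∧
    (∀ S T U V' : Multiset (Term F V), GeF ge gt prec f S T →
      GtF ge gt prec f T U → GeF ge gt prec f U V' → GtF ge gt prec f S V') := by
  have hcompat_left : ∀ a b c, ge a b → gt b c → gt a c :=
    fun a b c hab hbc => hcompat a b c c hab hbc (hge_refl c)
  refine ⟨geF_refl hge_refl, fun _ _ _ => GeF.trans hge_refl hge_trans hgt_trans hcompat,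
    gtF_irrefl hgt_irrefl hgt_trans hcompat_left, fun _ _ _ h₁ h₂ => ?_,
    fun _ _ _ _ h₁ h₂ h₃ => ?_⟩
  · exact h₁.geF.trans_gtF hge_refl hge_trans hgt_trans hcompat h₂
  · exact (h₁.trans_gtF hge_refl hge_trans hgt_trans hcompat h₂).trans_geF hge_refl hge_trans
      hgt_trans hcompat h₃

theorem f_extension_order_pair {F V : Type} (prec : F → F → Prop)
    (hprec_irrefl : Irreflexive prec) (hprec_trans : Transitive prec) (f : F)
    (ge gt : Term F V → Term F V → Prop)
    (hge_refl : Reflexive ge) (hge_trans : Transitive ge)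
    (hgt_irrefl : Irreflexive gt) (hgt_trans : Transitive gt)
    (hcompat : ∀ a b c d, ge a b → gt b c → ge c d → gt a d) :
    Reflexive (GeF ge gt prec f) ∧ Transitive (GeF ge gt prec f) ∧
    Irreflexive (GtF ge gt prec f) ∧ Transitive (GtF ge gt prec f) ∧
    (∀ S T U V' : Multiset (Term F V), GeF ge gt prec f S T →
      GtF ge gt prec f T U → GeF ge gt prec f U V' → GtF ge gt prec f S V') :=
  f_extension_order_pair_general prec f ge gt hge_refl hge_trans hgt_irrefl hgt_trans hcompat
end

section
/- Let M and N be multisets over a set A, and (≿, ≻) an order pair. Then M ≻^mul N if and only if (M − N) ≻^mul (N − M), where subtraction is multiset difference taken with respect to an equivalence relating elements via the 'equivalent part' ∼ = ≿ ∩ ≾ of the preorder; in the special case where ≿ is equality, M ≻^mul N iff M \ N ≻^mul N \ M. -/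
lemma mulgt_cons_cancel {α : Type*} (gt : α → α → Prop)
    (hirrefl : Irreflexive gt) (htrans : Transitive gt) (a : α) (M N : Multiset α)
    (h : MulGt Eq gt (a ::ₘ M) (a ::ₘ N)) : MulGt Eq gt M N := by
  obtain ⟨M₁, M₂, N₁, N₂, hM, hN, hrel, hne, hdom⟩ := h
  rw [Multiset.rel_eq] at hrel
  subst hrel
  by_cases ha : a ∈ M₁
  · obtain ⟨Z, rfl⟩ := Multiset.exists_cons_of_mem ha
    rw [Multiset.cons_add, Multiset.cons_inj_right] at hM hN
    exact ⟨Z, M₂, Z, N₂, hM, hN, Multiset.rel_eq.mpr rfl, hne, hdom⟩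
  · have haM₂ : a ∈ M₂ := by
      have : a ∈ a ::ₘ M := Multiset.mem_cons_self a M
      rw [hM, Multiset.mem_add] at this
      tauto
    have haN₂ : a ∈ N₂ := by
      have : a ∈ a ::ₘ N := Multiset.mem_cons_self a N
      rw [hN, Multiset.mem_add] at this
      tauto
    obtain ⟨X, rfl⟩ := Multiset.exists_cons_of_mem haM₂
    obtain ⟨Y, rfl⟩ := Multiset.exists_cons_of_mem haN₂
    rw [Multiset.add_cons, Multiset.cons_inj_right] at hM hN
    obtain ⟨x₀, hx₀mem, hx₀⟩ := hdom a (Multiset.mem_cons_self a Y)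
    have hx₀X : x₀ ∈ X := by
      rcases Multiset.mem_cons.mp hx₀mem with h' | h'
      · exact absurd (h' ▸ hx₀) (hirrefl a)
      · exact h'
    refine ⟨M₁, X, M₁, Y, hM, hN, Multiset.rel_eq.mpr rfl,
      fun h0 => by simp [h0] at hx₀X, fun y hy => ?_⟩
    obtain ⟨x, hxmem, hx⟩ := hdom y (Multiset.mem_cons_of_mem hy)
    rcases Multiset.mem_cons.mp hxmem with h' | h'
    · exact ⟨x₀, hx₀X, htrans hx₀ (h' ▸ hx)⟩
    · exact ⟨x, h', hx⟩

lemma mulgt_add_cancel {α : Type*} (gt : α → α → Prop)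
    (hirrefl : Irreflexive gt) (htrans : Transitive gt) (C M N : Multiset α) :
    MulGt Eq gt (C + M) (C + N) ↔ MulGt Eq gt M N := by
  constructor
  · induction C using Multiset.induction_on with
    | empty => simpa using id
    | cons a C ih =>
      intro h
      rw [Multiset.cons_add, Multiset.cons_add] at h
      exact ih (mulgt_cons_cancel gt hirrefl htrans a _ _ h)
  · rintro ⟨M₁, M₂, N₁, N₂, hM, hN, hrel, hne, hdom⟩
    rw [Multiset.rel_eq] at hrel
    subst hrel
    exact ⟨C + M₁, M₂, C + M₁, N₂, by rw [hM, add_assoc], by rw [hN, add_assoc],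
      Multiset.rel_eq.mpr rfl, hne, hdom⟩

theorem mulgt_iff_diff {α : Type*} [DecidableEq α] (gt : α → α → Prop)
    (hirrefl : Irreflexive gt) (htrans : Transitive gt) (M N : Multiset α) :
    MulGt Eq gt M N ↔ MulGt Eq gt (M - N) (N - M) := by
  have h := mulgt_add_cancel gt hirrefl htrans (M ∩ N) (M - N) (N - M)
  rw [add_comm (M ∩ N) (M - N), Multiset.sub_add_inter,
    add_comm (M ∩ N) (N - M), Multiset.inter_comm, Multiset.sub_add_inter] at h
  exact h
end

section
/- Let A be a set with an order pair (≿, ≻) such that ≻ ∪ ≺ ∪ ∼ = A × A is total in the sense that for all a, b either a ≻ b, b ≻ a, or a ∼ b (where ∼ = ≿ ∩ ≾). Then the multiset extension preserves this totality: for all finite multisets M, N over A, either M ≻^mul N, N ≻^mul M, or M ∼^mul N (M and N can be enumerated with elements pairwise related by ∼). -/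
lemma exists_max_of_total {α : Type*} (r : α → α → Prop) (htrans : Transitive r)
    (htot : ∀ a b, r a b ∨ r b a) :
    ∀ M : Multiset α, M ≠ 0 → ∃ a ∈ M, ∀ x ∈ M, r a x := by
  intro M
  refine Multiset.induction_on M (by simp) (fun {a s} ih _ => ?_)
  by_cases hs : s = 0
  · subst hs
    refine ⟨a, Multiset.mem_cons_self a 0, fun x hx => ?_⟩
    rcases Multiset.mem_cons.1 hx with rfl | hx
    · exact (htot x x).elim id id
    · simp at hx
  · obtain ⟨b, hb, hmax⟩ := ih hs
    rcases htot a b with h | h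
    · refine ⟨a, Multiset.mem_cons_self a s, fun x hx => ?_⟩
      rcases Multiset.mem_cons.1 hx with rfl | hx
      · exact (htot x x).elim id id
      · exact htrans h (hmax x hx)
    · refine ⟨b, Multiset.mem_cons_of_mem hb, fun x hx => ?_⟩
      rcases Multiset.mem_cons.1 hx with rfl | hx
      · exact h
      · exact hmax x hx

theorem mulext_total {α : Type*} (ge gt : α → α → Prop)
    (hge_refl : Reflexive ge) (hge_trans : Transitive ge)
    (hgt_irrefl : Irreflexive gt) (hgt_trans : Transitive gt)
    (hcompat : ∀ a b c d, ge a b → gt b c → ge c d → gt a d)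
    (htotal : ∀ a b : α, gt a b ∨ gt b a ∨ (ge a b ∧ ge b a)) :
    ∀ M N : Multiset α, MulGt ge gt M N ∨ MulGt ge gt N M ∨
      Multiset.Rel (fun a b => ge a b ∧ ge b a) M N := by
  classical
  set ge' : α → α → Prop := fun a b => ge a b ∨ gt a b with hge'def
  have hge'_trans : Transitive ge' := by
    intro a b c hab hbc
    rcases hab with h1 | h1 <;> rcases hbc with h2 | h2
    · exact Or.inl (hge_trans h1 h2)
    · exact Or.inr (hcompat a b c c h1 h2 (hge_refl c))
    · exact Or.inr (hcompat a a b c (hge_refl a) h1 h2)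
    · exact Or.inr (hgt_trans h1 h2)
  have hge'_tot : ∀ a b, ge' a b ∨ ge' b a := by
    intro a b
    rcases htotal a b with h | h | h
    exacts [Or.inl (Or.inr h), Or.inr (Or.inr h), Or.inl (Or.inl h.1)]
  have key : ∀ a b c, gt a b → ge' b c → gt a c := by
    intro a b c h1 h2
    rcases h2 with h | h
    · exact hcompat a a b c (hge_refl a) h1 h
    · exact hgt_trans h1 h
  suffices H : ∀ n (M N : Multiset α), Multiset.card M + Multiset.card N ≤ n →
      MulGt ge gt M N ∨ MulGt ge gt N M ∨
        Multiset.Rel (fun a b => ge a b ∧ ge b a) M N by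
    intro M N; exact H _ M N le_rfl
  intro n
  induction n with
  | zero =>
    intro M N h
    have hM : M = 0 := by
      rw [← Multiset.card_eq_zero]; omega
    have hN : N = 0 := by
      rw [← Multiset.card_eq_zero]; omega
    subst hM; subst hN
    exact Or.inr (Or.inr Multiset.Rel.zero)
  | succ n ih =>
    intro M N hcard
    by_cases hM : M = 0
    · by_cases hN : N = 0
      · subst hM; subst hN
        exact Or.inr (Or.inr Multiset.Rel.zero)
      · refine Or.inr (Or.inl ⟨0, N, 0, 0, by simp, by simp [hM], Multiset.Rel.zero, hN, ?_⟩)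
        intro y hy; simp at hy
    · by_cases hN : N = 0
      · refine Or.inl ⟨0, M, 0, 0, by simp, by simp [hN], Multiset.Rel.zero, hM, ?_⟩
        intro y hy; simp at hy
      · obtain ⟨a, haM, hamax⟩ := exists_max_of_total ge' hge'_trans hge'_tot M hM
        obtain ⟨b, hbN, hbmax⟩ := exists_max_of_total ge' hge'_trans hge'_tot N hN
        rcases htotal a b with h | h | h
        · exact Or.inl ⟨0, M, 0, N, by simp, by simp, Multiset.Rel.zero, hM,
            fun y hy => ⟨a, haM, key a b y h (hbmax y hy)⟩⟩
        · exact Or.inr (Or.inl ⟨0, N, 0, M, by simp, by simp, Multiset.Rel.zero, hN,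
            fun y hy => ⟨b, hbN, key b a y h (hamax y hy)⟩⟩)
        · have hM' : M = a ::ₘ M.erase a := (Multiset.cons_erase haM).symm
          have hN' : N = b ::ₘ N.erase b := (Multiset.cons_erase hbN).symm
          have hcard' : Multiset.card (M.erase a) + Multiset.card (N.erase b) ≤ n := by
            rw [Multiset.card_erase_of_mem haM, Multiset.card_erase_of_mem hbN,
              Nat.pred_eq_sub_one, Nat.pred_eq_sub_one]
            have h3 : 1 ≤ Multiset.card M := Multiset.card_pos.mpr hM
            have h4 : 1 ≤ Multiset.card N := Multiset.card_pos.mpr hN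
            omega
          rcases ih (M.erase a) (N.erase b) hcard' with
            ⟨M₁, M₂, N₁, N₂, e1, e2, hrel, hne, hdom⟩ |
            ⟨M₁, M₂, N₁, N₂, e1, e2, hrel, hne, hdom⟩ | hrel
          · exact Or.inl ⟨a ::ₘ M₁, M₂, b ::ₘ N₁, N₂,
              by rw [hM', e1, Multiset.cons_add],
              by rw [hN', e2, Multiset.cons_add],
              Multiset.Rel.cons h.1 hrel, hne, hdom⟩
          · exact Or.inr (Or.inl ⟨b ::ₘ M₁, M₂, a ::ₘ N₁, N₂,
              by rw [hN', e1, Multiset.cons_add],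
              by rw [hM', e2, Multiset.cons_add],
              Multiset.Rel.cons h.2 hrel, hne, hdom⟩)
          · refine Or.inr (Or.inr ?_)
            rw [hM', hN']
            exact Multiset.Rel.cons ⟨h.1, h.2⟩ hrel
end
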